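/- The classical moment map of the SL(2)-action on ℝ² is a quantum moment map for the Moyal product: with E = (1/2)x², F = −(1/2)p², H = −x·p regarded as constant power series in PowerSeries (MvPolynomial (Fin 2) ℝ), one has E ⋆ F − F ⋆ E = λ • H, H ⋆ E − E ⋆ H = 2λ • E, and H ⋆ F − F ⋆ H = −2λ • F (matching the sl(2) relations [E,F]=H, [H,E]=2E, [H,F]=−2F). -/

import Mathlib

noncomputable section

/-- Iterated partial derivative `∂_{i 1} ⋯ ∂_{i k} u` of a multivariate polynomial. -/
def iterPDeriv {m k : ℕ} (i : Fin k → Fin m) (u : MvPolynomial (Fin m) ℝ) :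
    MvPolynomial (Fin m) ℝ :=
  (List.ofFn i).foldl (fun p t => MvPolynomial.pderiv t p) u

/-- The `k`-th Moyal bidifferential operator
`C_k(u,v) = Σ_{i,j : Fin k → Fin m} (Π_t ω (i t) (j t)) • (∂_{i} u) · (∂_{j} v)`. -/
def moyalC {m : ℕ} (ω : Fin m → Fin m → ℝ) (k : ℕ)
    (u v : MvPolynomial (Fin m) ℝ) : MvPolynomial (Fin m) ℝ :=
  ∑ i : Fin k → Fin m, ∑ j : Fin k → Fin m,
    (∏ t, ω (i t) (j t)) • (iterPDeriv i u * iterPDeriv j v)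

/-- The Moyal product of formal power series with polynomial coefficients:
`U ⋆ V = Σ_n (Σ_{a+b+k=n} (1/(2^k k!)) • C_k(u_a, v_b)) λ^n`. -/
def moyal {m : ℕ} (ω : Fin m → Fin m → ℝ)
    (U V : PowerSeries (MvPolynomial (Fin m) ℝ)) :
    PowerSeries (MvPolynomial (Fin m) ℝ) :=
  PowerSeries.mk fun n =>
    ∑ p ∈ Finset.HasAntidiagonal.antidiagonal n, ∑ q ∈ Finset.HasAntidiagonal.antidiagonal p.2,
      (1 / ((2 ^ q.2 * Nat.factorial q.2 : ℕ) : ℝ)) •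
        moyalC ω q.2 (PowerSeries.coeff p.1 U) (PowerSeries.coeff q.1 V)

/-- The standard symplectic matrix on `ℝ²`: `ω 0 1 = 1`, `ω 1 0 = -1`. -/
def ωstd : Fin 2 → Fin 2 → ℝ := ![![0, 1], ![-1, 0]]

/-- `E = (1/2) x²` where `x = X 0`. -/
def Epoly : MvPolynomial (Fin 2) ℝ := (1 / 2 : ℝ) • (MvPolynomial.X 0 ^ 2)

/-- `F = -(1/2) p²` where `p = X 1`. -/
def Fpoly : MvPolynomial (Fin 2) ℝ := -((1 / 2 : ℝ) • (MvPolynomial.X 1 ^ 2))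

/-- `H = -x·p`. -/
def Hpoly : MvPolynomial (Fin 2) ℝ := -(MvPolynomial.X 0 * MvPolynomial.X 1)

section Aux
open MvPolynomial

lemma iterPDeriv_nil {m : ℕ} (i : Fin 0 → Fin m) (u : MvPolynomial (Fin m) ℝ) :
    iterPDeriv i u = u := by simp [iterPDeriv]

lemma iterPDeriv_succ {m k : ℕ} (i : Fin (k+1) → Fin m) (u : MvPolynomial (Fin m) ℝ) :
    iterPDeriv i u = iterPDeriv (fun t => i t.succ) (MvPolynomial.pderiv (i 0) u) := by
  simp [iterPDeriv, List.ofFn_succ]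

lemma iterPDeriv_zero {m k : ℕ} (i : Fin k → Fin m) :
    iterPDeriv i (0 : MvPolynomial (Fin m) ℝ) = 0 := by
  induction k with
  | zero => simp [iterPDeriv_nil]
  | succ n ih => rw [iterPDeriv_succ]; simp [ih]

lemma moyalC_zero_left {m : ℕ} (ω : Fin m → Fin m → ℝ) (k : ℕ) (v : MvPolynomial (Fin m) ℝ) :
    moyalC ω k 0 v = 0 := by simp [moyalC, iterPDeriv_zero]

lemma moyalC_zero_right {m : ℕ} (ω : Fin m → Fin m → ℝ) (k : ℕ) (u : MvPolynomial (Fin m) ℝ) :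
    moyalC ω k u 0 = 0 := by simp [moyalC, iterPDeriv_zero]

lemma moyalC_zero_of_third {m : ℕ} (ω : Fin m → Fin m → ℝ) (k : ℕ)
    (u v : MvPolynomial (Fin m) ℝ)
    (h : ∀ a b c : Fin m, MvPolynomial.pderiv c (MvPolynomial.pderiv b (MvPolynomial.pderiv a u)) = 0) :
    moyalC ω (k + 3) u v = 0 := by
  have key : ∀ i : Fin (k+3) → Fin m, iterPDeriv i u = 0 := by
    intro i
    rw [iterPDeriv_succ, iterPDeriv_succ, iterPDeriv_succ, h, iterPDeriv_zero]
  simp [moyalC, key]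

lemma coeff_moyal_C_C {m : ℕ} (ω : Fin m → Fin m → ℝ)
    (u v : MvPolynomial (Fin m) ℝ) (n : ℕ) :
    PowerSeries.coeff n (moyal ω (PowerSeries.C u) (PowerSeries.C v))
      = (1 / ((2 ^ n * Nat.factorial n : ℕ) : ℝ)) • moyalC ω n u v := by
  rw [moyal, PowerSeries.coeff_mk]
  rw [Finset.sum_eq_single_of_mem (0, n) (by simp)]
  · rw [Finset.sum_eq_single_of_mem (0, n) (by simp)]
    · simp
    · rintro ⟨a, b⟩ hmem hne
      have : a ≠ 0 := by
        rintro rfl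
        simp at hmem
        simp [hmem] at hne
      simp [PowerSeries.coeff_C, this, moyalC_zero_right]
  · rintro ⟨a, b⟩ hmem hne
    have : a ≠ 0 := by
      rintro rfl
      simp at hmem
      simp [hmem] at hne
    simp [PowerSeries.coeff_C, this, moyalC_zero_left]

lemma sum_fun_one {m : ℕ} {M : Type*} [AddCommMonoid M] (f : (Fin 1 → Fin m) → M) :
    ∑ i, f i = ∑ a, f (fun _ => a) := by
  rw [← (Equiv.funUnique (Fin 1) (Fin m)).symm.sum_comp]
  apply Finset.sum_congr rfl; intro a _
  congr 1

lemma sum_fun_two {m : ℕ} {M : Type*} [AddCommMonoid M] (f : (Fin 2 → Fin m) → M) :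
    ∑ i, f i = ∑ a, ∑ b, f ![a, b] := by
  rw [← (piFinTwoEquiv fun _ => Fin m).symm.sum_comp, Fintype.sum_prod_type]
  apply Finset.sum_congr rfl; intro a _
  apply Finset.sum_congr rfl; intro b _
  have h : (piFinTwoEquiv fun _ => Fin m).symm (a, b) = ![a, b] := by
    funext t; fin_cases t <;> rfl
  rw [h]

lemma iterPDeriv_one {m : ℕ} (i : Fin 1 → Fin m) (u : MvPolynomial (Fin m) ℝ) :
    iterPDeriv i u = MvPolynomial.pderiv (i 0) u := by
  rw [iterPDeriv_succ, iterPDeriv_nil]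

lemma iterPDeriv_two {m : ℕ} (i : Fin 2 → Fin m) (u : MvPolynomial (Fin m) ℝ) :
    iterPDeriv i u = MvPolynomial.pderiv (i 1) (MvPolynomial.pderiv (i 0) u) := by
  rw [iterPDeriv_succ, iterPDeriv_succ, iterPDeriv_nil]
  rfl

lemma moyalC_zero' {m : ℕ} (ω : Fin m → Fin m → ℝ) (u v : MvPolynomial (Fin m) ℝ) :
    moyalC ω 0 u v = u * v := by
  simp [moyalC, iterPDeriv_nil]

lemma moyalC_one {m : ℕ} (ω : Fin m → Fin m → ℝ) (u v : MvPolynomial (Fin m) ℝ) :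
    moyalC ω 1 u v = ∑ a, ∑ b, ω a b • (MvPolynomial.pderiv a u * MvPolynomial.pderiv b v) := by
  rw [moyalC, sum_fun_one]
  apply Finset.sum_congr rfl; intro a _
  rw [sum_fun_one]
  simp [iterPDeriv_one]

lemma moyalC_two {m : ℕ} (ω : Fin m → Fin m → ℝ) (u v : MvPolynomial (Fin m) ℝ) :
    moyalC ω 2 u v = ∑ a, ∑ b, ∑ c, ∑ d,
      (ω a c * ω b d) • (MvPolynomial.pderiv b (MvPolynomial.pderiv a u)
        * MvPolynomial.pderiv d (MvPolynomial.pderiv c v)) := by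
  rw [moyalC, sum_fun_two]
  apply Finset.sum_congr rfl; intro a _
  apply Finset.sum_congr rfl; intro b _
  rw [sum_fun_two]
  apply Finset.sum_congr rfl; intro c _
  apply Finset.sum_congr rfl; intro d _
  simp [iterPDeriv_two, Fin.prod_univ_two]

lemma two_eq_C : (2:MvPolynomial (Fin 2) ℝ) = MvPolynomial.C (2:ℝ) := (map_ofNat _ 2).symm

lemma dE0 : pderiv (0:Fin 2) Epoly = X 0 := by
  simp [Epoly]
  rw [two_eq_C, ← MvPolynomial.smul_eq_C_mul, smul_smul]; norm_num

lemma dE1 : pderiv (1:Fin 2) Epoly = 0 := by simp [Epoly]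

lemma dF0 : pderiv (0:Fin 2) Fpoly = 0 := by simp [Fpoly]

lemma dF1 : pderiv (1:Fin 2) Fpoly = -(X 1) := by
  simp [Fpoly]
  rw [two_eq_C, ← MvPolynomial.smul_eq_C_mul, smul_smul]; norm_num

lemma dH0 : pderiv (0:Fin 2) Hpoly = -(X 1) := by simp [Hpoly]

lemma dH1 : pderiv (1:Fin 2) Hpoly = -(X 0) := by simp [Hpoly]

lemma d3E : ∀ a b c : Fin 2, pderiv c (pderiv b (pderiv a Epoly)) = 0 := by
  intro a b c
  fin_cases a <;> fin_cases b <;> fin_cases c <;> simp [dE0, dE1]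

lemma d3F : ∀ a b c : Fin 2, pderiv c (pderiv b (pderiv a Fpoly)) = 0 := by
  intro a b c
  fin_cases a <;> fin_cases b <;> fin_cases c <;> simp [dF0, dF1]

lemma d3H : ∀ a b c : Fin 2, pderiv c (pderiv b (pderiv a Hpoly)) = 0 := by
  intro a b c
  fin_cases a <;> fin_cases b <;> fin_cases c <;> simp [dH0, dH1]

lemma c1EF : moyalC ωstd 1 Epoly Fpoly = -(X 0 * X 1) := by
  rw [moyalC_one]; simp [Fin.sum_univ_two, ωstd, dE0, dE1, dF0, dF1]

lemma c1FE : moyalC ωstd 1 Fpoly Epoly = X 0 * X 1 := by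
  rw [moyalC_one]; simp [Fin.sum_univ_two, ωstd, dE0, dE1, dF0, dF1]; ring

lemma c1HE : moyalC ωstd 1 Hpoly Epoly = X 0 ^ 2 := by
  rw [moyalC_one]; simp [Fin.sum_univ_two, ωstd, dE0, dE1, dH0, dH1]; ring

lemma c1EH : moyalC ωstd 1 Epoly Hpoly = -(X 0 ^ 2) := by
  rw [moyalC_one]; simp [Fin.sum_univ_two, ωstd, dE0, dE1, dH0, dH1]; ring

lemma c1HF : moyalC ωstd 1 Hpoly Fpoly = X 1 ^ 2 := by
  rw [moyalC_one]; simp [Fin.sum_univ_two, ωstd, dF0, dF1, dH0, dH1]; ring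

lemma c1FH : moyalC ωstd 1 Fpoly Hpoly = -(X 1 ^ 2) := by
  rw [moyalC_one]; simp [Fin.sum_univ_two, ωstd, dF0, dF1, dH0, dH1]; ring

lemma c2EF : moyalC ωstd 2 Epoly Fpoly = -1 := by
  rw [moyalC_two]; simp [Fin.sum_univ_two, ωstd, dE0, dE1, dF0, dF1]

lemma c2FE : moyalC ωstd 2 Fpoly Epoly = -1 := by
  rw [moyalC_two]; simp [Fin.sum_univ_two, ωstd, dE0, dE1, dF0, dF1]

lemma c2HE : moyalC ωstd 2 Hpoly Epoly = 0 := by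
  rw [moyalC_two]; simp [Fin.sum_univ_two, ωstd, dE0, dE1, dH0, dH1]

lemma c2EH : moyalC ωstd 2 Epoly Hpoly = 0 := by
  rw [moyalC_two]; simp [Fin.sum_univ_two, ωstd, dE0, dE1, dH0, dH1]

lemma c2HF : moyalC ωstd 2 Hpoly Fpoly = 0 := by
  rw [moyalC_two]; simp [Fin.sum_univ_two, ωstd, dF0, dF1, dH0, dH1]

lemma c2FH : moyalC ωstd 2 Fpoly Hpoly = 0 := by
  rw [moyalC_two]; simp [Fin.sum_univ_two, ωstd, dF0, dF1, dH0, dH1]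

lemma moyal_comm_eq (u v w : MvPolynomial (Fin 2) ℝ)
    (h3u : ∀ a b c : Fin 2, pderiv c (pderiv b (pderiv a u)) = 0)
    (h3v : ∀ a b c : Fin 2, pderiv c (pderiv b (pderiv a v)) = 0)
    (h1 : moyalC ωstd 1 u v - moyalC ωstd 1 v u = (2:ℝ) • w)
    (h2 : moyalC ωstd 2 u v = moyalC ωstd 2 v u) :
    moyal ωstd (PowerSeries.C u) (PowerSeries.C v)
      - moyal ωstd (PowerSeries.C v) (PowerSeries.C u)
      = PowerSeries.X * PowerSeries.C w := by
  apply PowerSeries.ext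
  intro n
  rw [map_sub, coeff_moyal_C_C, coeff_moyal_C_C]
  match n with
  | 0 =>
    simp [moyalC_zero', mul_comm]
  | 1 =>
    rw [PowerSeries.coeff_succ_X_mul, PowerSeries.coeff_zero_C]
    rw [← smul_sub, h1, smul_smul]
    norm_num
  | 2 =>
    rw [PowerSeries.coeff_succ_X_mul, h2, sub_self]
    simp [PowerSeries.coeff_C]
  | (k+3) =>
    rw [moyalC_zero_of_third _ _ _ _ h3u, moyalC_zero_of_third _ _ _ _ h3v,
      PowerSeries.coeff_succ_X_mul]
    simp [PowerSeries.coeff_C]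

end Aux

/-- The classical moment map for the `SL(2)`-action on `ℝ²` is a quantum moment
map for the Moyal product: the Moyal commutators of `E, F, H` reproduce
`λ` times the `sl(2)` relations. -/
theorem sl2_quantum_moment_map :
    (moyal ωstd (PowerSeries.C Epoly) (PowerSeries.C Fpoly)
        - moyal ωstd (PowerSeries.C Fpoly) (PowerSeries.C Epoly)
      = PowerSeries.X * PowerSeries.C Hpoly) ∧
    (moyal ωstd (PowerSeries.C Hpoly) (PowerSeries.C Epoly)
        - moyal ωstd (PowerSeries.C Epoly) (PowerSeries.C Hpoly)
      = 2 * (PowerSeries.X * PowerSeries.C Epoly)) ∧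
    (moyal ωstd (PowerSeries.C Hpoly) (PowerSeries.C Fpoly)
        - moyal ωstd (PowerSeries.C Fpoly) (PowerSeries.C Hpoly)
      = -(2 * (PowerSeries.X * PowerSeries.C Fpoly))) := by
  have hE2 : (MvPolynomial.X 0 ^ 2 : MvPolynomial (Fin 2) ℝ) = 2 * Epoly := by
    rw [Epoly, two_eq_C, ← MvPolynomial.smul_eq_C_mul, smul_smul]; norm_num
  have hF2 : (MvPolynomial.X 1 ^ 2 : MvPolynomial (Fin 2) ℝ) = (-2) * Fpoly := by
    rw [Fpoly, show ((-2:MvPolynomial (Fin 2) ℝ)) = MvPolynomial.C (-2:ℝ) by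
        rw [map_neg, map_ofNat],
      ← MvPolynomial.smul_eq_C_mul, smul_neg, smul_smul]
    norm_num
  refine ⟨?_, ?_, ?_⟩
  · exact moyal_comm_eq _ _ _ d3E d3F
      (by rw [c1EF, c1FE, Hpoly, two_smul]; ring) (by rw [c2EF, c2FE])
  · rw [show (2 : PowerSeries (MvPolynomial (Fin 2) ℝ)) * (PowerSeries.X * PowerSeries.C Epoly)
        = PowerSeries.X * PowerSeries.C (MvPolynomial.X 0 ^ 2) by
      rw [hE2, map_mul, map_ofNat]; ring]
    exact moyal_comm_eq _ _ _ d3H d3E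
      (by rw [c1HE, c1EH, two_smul]; ring) (by rw [c2HE, c2EH])
  · rw [show -((2 : PowerSeries (MvPolynomial (Fin 2) ℝ)) * (PowerSeries.X * PowerSeries.C Fpoly))
        = PowerSeries.X * PowerSeries.C (MvPolynomial.X 1 ^ 2) by
      rw [hF2, map_mul, map_neg, map_ofNat]; ring]
    exact moyal_comm_eq _ _ _ d3H d3F
      (by rw [c1HF, c1FH, two_smul]; ring) (by rw [c2HF, c2FH])
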